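/- arXiv:2412.15135 — 6 statements merged into one kernel-verified Lean document; each statement's English description precedes it below -/
import Mathlib

section
/- Let V be a finite type, E : V → V → Prop an edge relation, r : V a root vertex, and F a set of vertices. There exists an infinite walk w : ℕ → V with w 0 = r, E (w n) (w (n+1)) for all n, and {n | w n ∈ F} infinite, if and only if there exists a vertex v ∈ F such that v is reachable from r and there is a nonempty closed walk from v back to itself, i.e., there exists u with E v u and v reachable from u. -/
/-!
By pigeonhole on the finite vertex set, a walk visiting `F` infinitely often visits some `v ∈ F`
at two times `m < n`; its segments give a path `r →* v` and a nonempty cycle `v →⁺ v`.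
Conversely, the lasso that follows the path to `v` and then runs around the cycle forever is at
`v` at every multiple of the cycle length after the stem.
-/

open Relation Set

section

variable {V : Type*} {E : V → V → Prop}

theorem Relation.TransGen.exists_seq {a b : V} (h : TransGen E a b) :
    ∃ (k : ℕ) (f : ℕ → V), 0 < k ∧ f 0 = a ∧ f k = b ∧ ∀ i < k, E (f i) (f (i + 1)) := by
  induction h using TransGen.head_induction_on with
  | @single a hab => exact ⟨1, fun | 0 => a | _ => b, one_pos, rfl, rfl, by simpa using hab⟩
  | @head a c hac _ ih =>
    obtain ⟨k, f, -, rfl, rfl, hf⟩ := ih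
    refine ⟨k + 1, fun | 0 => a | i + 1 => f i, k.succ_pos, rfl, rfl, ?_⟩
    rintro (_ | i) hi
    · exact hac
    · exact hf i (by omega)

theorem reflTransGen_of_walk {w : ℕ → V} (hw : ∀ n, E (w n) (w (n + 1))) {m n : ℕ}
    (hmn : m ≤ n) : ReflTransGen E (w m) (w n) :=
  (reflTransGen_of_succ_of_le _ (fun i _ => hw i) hmn).lift w fun _ _ h => h

theorem transGen_of_walk {w : ℕ → V} (hw : ∀ n, E (w n) (w (n + 1))) {m n : ℕ}
    (hmn : m < n) : TransGen E (w m) (w n) :=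
  (transGen_of_succ_of_lt _ (fun i _ => hw i) hmn).lift w fun _ _ h => h

def HasRecurrentWalk (E : V → V → Prop) (F : Set V) (x : V) : Prop :=
  ∃ w : ℕ → V, w 0 = x ∧ (∀ n, E (w n) (w (n + 1))) ∧ {n | w n ∈ F}.Infinite

variable {F : Set V}

theorem HasRecurrentWalk.of_rel {a b : V} (hab : E a b) (hb : HasRecurrentWalk E F b) :
    HasRecurrentWalk E F a := by
  obtain ⟨w, rfl, hw, hF⟩ := hb
  refine ⟨fun | 0 => a | n + 1 => w n, rfl, ?_, ?_⟩
  · rintro (_ | n)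
    exacts [hab, hw n]
  · refine (hF.image Nat.succ_injective.injOn).mono ?_
    rintro _ ⟨n, hn, rfl⟩
    exact hn

theorem HasRecurrentWalk.of_reflTransGen {a b : V} (hab : ReflTransGen E a b)
    (hb : HasRecurrentWalk E F b) : HasRecurrentWalk E F a := by
  induction hab using ReflTransGen.head_induction_on with
  | refl => exact hb
  | head hac _ ih => exact ih.of_rel hac

theorem hasRecurrentWalk_of_transGen_self {v : V} (hv : v ∈ F) (h : TransGen E v v) :
    HasRecurrentWalk E F v := by
  obtain ⟨k, f, hk, hf0, hfk, hf⟩ := h.exists_seq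
  refine ⟨fun n => f (n % k), by simp [hf0], fun n => ?_, ?_⟩
  · have hnext : f ((n + 1) % k) = f (n % k + 1) := by
      rw [← Nat.mod_add_mod]
      rcases Nat.lt_or_eq_of_le (Nat.mod_lt n hk) with hlt | heq
      · rw [Nat.mod_eq_of_lt hlt]
      · rw [show n % k + 1 = k from heq, Nat.mod_self, hf0, hfk]
    simpa only [hnext] using hf (n % k) (Nat.mod_lt n hk)
  · refine infinite_of_injective_forall_mem (f := (· * k)) (mul_left_injective₀ hk.ne')
      fun m => ?_
    simp [hf0, hv]

theorem HasRecurrentWalk.exists_mem_transGen_self [Finite V] {r : V}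
    (h : HasRecurrentWalk E F r) : ∃ v ∈ F, ReflTransGen E r v ∧ TransGen E v v := by
  obtain ⟨w, rfl, hw, hF⟩ := h
  obtain ⟨m, hm, n, -, hmn, hwmn⟩ :=
    hF.exists_lt_map_eq_of_mapsTo (mapsTo_univ w _) finite_univ
  refine ⟨w m, hm, reflTransGen_of_walk hw m.zero_le, ?_⟩
  simpa only [hwmn] using transGen_of_walk hw hmn

end

/-- existence of an infinite walk from root `r` hitting `F` infinitely
often is equivalent to existence of a vertex `v ∈ F` reachable from `r` that lies
on a nonempty closed walk. -/
theorem infinite_walk_hits_infinitely_iff {V : Type*} [Fintype V]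
    (E : V → V → Prop) (r : V) (F : Set V) :
    (∃ w : ℕ → V, w 0 = r ∧ (∀ n, E (w n) (w (n + 1))) ∧ {n | w n ∈ F}.Infinite) ↔
      ∃ v ∈ F, Relation.ReflTransGen E r v ∧
        ∃ u, E v u ∧ Relation.ReflTransGen E u v := by
  -- the closed-walk condition is `TransGen E v v`
  simp only [← TransGen.head'_iff]
  refine ⟨HasRecurrentWalk.exists_mem_transGen_self, ?_⟩
  rintro ⟨v, hvF, hrv, hvv⟩
  exact (hasRecurrentWalk_of_transGen_self hvF hvv).of_reflTransGen hrv
end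

section
/- Let S be a finite type and P : S → S → ℝ a row-stochastic matrix (all entries nonnegative and each row sums to 1). Let the edge relation have an edge from s to t iff P s t > 0, let G ⊆ S, and let Z = {s | no element of G is reachable from s}. Then there exists a unique function x : S → ℝ such that x s = 1 for all s ∈ G, x s = 0 for all s ∈ Z, and x s = ∑_{t ∈ S} P s t * x t for all s ∉ G ∪ Z. -/
/-!
Write `A = G ∪ Z` and let `Q` be `P` with the rows of `A` replaced by zero. The system says
exactly `(1 - Q) x = 𝟙_G`, so it suffices that `1 - Q` is injective, i.e. that a function `y`
vanishing on `A` and harmonic (`y s = ∑ t, P s t * y t`) off `A` is zero. This is the maximum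
principle: harmonicity forces `y` to stay equal to its maximum along every edge leaving a
maximiser outside `A`, and every state reaches `A`, where `y = 0`; hence `max y ≤ 0`, and
likewise `max (-y) ≤ 0`.
-/

open Finset Matrix

section MaximumPrinciple

variable {S : Type*} [Fintype S]

lemma eq_of_le_of_eq_sum_mul_of_pos {w y : S → ℝ} {m : ℝ} (hw0 : ∀ t, 0 ≤ w t)
    (hw1 : ∑ t, w t = 1) (hle : ∀ t, y t ≤ m) (hm : m = ∑ t, w t * y t) {t : S}
    (ht : 0 < w t) : y t = m := by
  have hsum : ∑ u, w u * (m - y u) = 0 := by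
    simp only [mul_sub, sum_sub_distrib, ← sum_mul, hw1, one_mul, ← hm, sub_self]
  have hterm := (sum_eq_zero_iff_of_nonneg fun u _ ↦
    mul_nonneg (hw0 u) (sub_nonneg.2 (hle u))).1 hsum t (mem_univ t)
  rcases mul_eq_zero.1 hterm with h | h
  · exact absurd h ht.ne'
  · linarith

variable {P : S → S → ℝ} {A : Set S} {y : S → ℝ}

lemma eq_of_reflTransGen_of_forall_le (hP0 : ∀ s t, 0 ≤ P s t) (hP1 : ∀ s, ∑ t, P s t = 1)
    (hharm : ∀ s ∉ A, y s = ∑ t, P s t * y t) {s : S} (hmax : ∀ t, y t ≤ y s)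
    (hA : ∀ a ∈ A, y a < y s) {t : S}
    (hst : Relation.ReflTransGen (fun a b ↦ 0 < P a b) s t) : y t = y s := by
  induction hst with
  | refl => rfl
  | @tail b c _ hbc ih =>
    have hb : b ∉ A := fun hb ↦ (hA b hb).ne ih
    exact eq_of_le_of_eq_sum_mul_of_pos (hP0 b) (hP1 b) hmax (ih ▸ hharm b hb) hbc

lemma nonpos_of_harmonic (hP0 : ∀ s t, 0 ≤ P s t) (hP1 : ∀ s, ∑ t, P s t = 1)
    (hharm : ∀ s ∉ A, y s = ∑ t, P s t * y t) (hA : ∀ a ∈ A, y a ≤ 0)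
    (hreach : ∀ s, ∃ a ∈ A, Relation.ReflTransGen (fun a b ↦ 0 < P a b) s a) (s : S) :
    y s ≤ 0 := by
  obtain ⟨m, -, hm⟩ := exists_max_image univ y ⟨s, mem_univ s⟩
  by_contra! hs
  have hlt : ∀ a ∈ A, y a < y m := fun a ha ↦
    (hA a ha).trans_lt (hs.trans_le (hm s (mem_univ s)))
  obtain ⟨a, ha, hma⟩ := hreach m
  exact (hlt a ha).ne <|
    eq_of_reflTransGen_of_forall_le hP0 hP1 hharm (fun t ↦ hm t (mem_univ t)) hlt hma

lemma eq_zero_of_harmonic (hP0 : ∀ s t, 0 ≤ P s t) (hP1 : ∀ s, ∑ t, P s t = 1)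
    (hharm : ∀ s ∉ A, y s = ∑ t, P s t * y t) (hA : ∀ a ∈ A, y a = 0)
    (hreach : ∀ s, ∃ a ∈ A, Relation.ReflTransGen (fun a b ↦ 0 < P a b) s a) : y = 0 := by
  have hharm_neg : ∀ s ∉ A, (-y) s = ∑ t, P s t * (-y) t := fun s hs ↦ by simp [hharm s hs]
  funext s
  have hle := nonpos_of_harmonic hP0 hP1 hharm (fun a ha ↦ (hA a ha).le) hreach s
  have hge := nonpos_of_harmonic hP0 hP1 hharm_neg (fun a ha ↦ by simp [hA a ha]) hreach s
  simp only [Pi.neg_apply, Pi.zero_apply] at hge ⊢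
  linarith

end MaximumPrinciple

section LinearSystem

variable {S : Type*} [Fintype S]

open scoped Classical in
noncomputable def zeroRows (P : S → S → ℝ) (A : Set S) : Matrix S S ℝ :=
  Matrix.of fun s t ↦ if s ∈ A then 0 else P s t

lemma existsUnique_mulVec_eq {ι K : Type*} [Fintype ι] [DecidableEq ι] [Field K]
    {M : Matrix ι ι K} (hM : Function.Injective M.mulVec) (b : ι → K) : ∃! x, M *ᵥ x = b :=
  Function.Bijective.existsUnique
    ⟨hM, mulVec_surjective_iff_isUnit.2 (mulVec_injective_iff_isUnit.1 hM)⟩ b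

variable [DecidableEq S] {P : S → S → ℝ}

lemma one_sub_zeroRows_mulVec_eq_iff {A : Set S} {b : S → ℝ} (hb : ∀ s ∉ A, b s = 0)
    (x : S → ℝ) :
    (1 - zeroRows P A) *ᵥ x = b ↔
      (∀ s ∈ A, x s = b s) ∧ ∀ s ∉ A, x s = ∑ t, P s t * x t := by
  rw [sub_mulVec, one_mulVec, sub_eq_iff_eq_add, funext_iff]
  simp only [Pi.add_apply, mulVec, dotProduct, zeroRows, of_apply]
  constructor
  · intro h
    exact ⟨fun s hs ↦ by simpa [hs] using h s, fun s hs ↦ by simpa [hs, hb s hs] using h s⟩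
  · rintro ⟨hA, hAc⟩ s
    by_cases hs : s ∈ A
    · simp [hs, hA s hs]
    · simp [hs, hb s hs, hAc s hs]

lemma injective_one_sub_zeroRows_mulVec (hP0 : ∀ s t, 0 ≤ P s t)
    (hP1 : ∀ s, ∑ t, P s t = 1) {A : Set S}
    (hreach : ∀ s, ∃ a ∈ A, Relation.ReflTransGen (fun a b ↦ 0 < P a b) s a) :
    Function.Injective (1 - zeroRows P A).mulVec := by
  refine (injective_iff_map_eq_zero (1 - zeroRows P A).mulVecLin).2 fun y hy ↦ ?_
  obtain ⟨hA, hAc⟩ := (one_sub_zeroRows_mulVec_eq_iff (fun _ _ ↦ rfl) y).1 hy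
  exact eq_zero_of_harmonic hP0 hP1 hAc hA hreach

lemma one_sub_zeroRows_mulVec_eq_indicator_iff {G Z : Set S} (hGZ : Disjoint G Z)
    (x : S → ℝ) :
    (1 - zeroRows P (G ∪ Z)) *ᵥ x = G.indicator 1 ↔
      (∀ s ∈ G, x s = 1) ∧ (∀ s ∈ Z, x s = 0) ∧
        ∀ s ∉ G ∪ Z, x s = ∑ t, P s t * x t := by
  have hb : ∀ s ∉ G ∪ Z, G.indicator 1 s = (0 : ℝ) := fun s hs ↦
    Set.indicator_of_notMem (fun hG ↦ hs (Or.inl hG)) _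
  have hunion : (∀ s ∈ G ∪ Z, x s = G.indicator 1 s) ↔
      (∀ s ∈ G, x s = 1) ∧ ∀ s ∈ Z, x s = 0 := by
    simp only [Set.mem_union, or_imp, forall_and]
    refine and_congr (forall₂_congr fun s hs ↦ ?_) (forall₂_congr fun s hs ↦ ?_)
    · simp [hs]
    · simp [Set.disjoint_right.1 hGZ hs]
  rw [one_sub_zeroRows_mulVec_eq_iff hb, hunion, and_assoc]

end LinearSystem

/-- the linear system for reachability probabilities in a finite
Markov chain has a unique solution. Here `P` is a row-stochastic matrix, `G` is
the goal set, and the set `{u | ∀ g ∈ G, ¬Reach u g}` is the set of states from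
which no goal state is reachable. -/
theorem reachability_linear_system_unique_solution {S : Type*} [Fintype S]
    (P : S → S → ℝ) (hP0 : ∀ s t, 0 ≤ P s t) (hP1 : ∀ s, ∑ t, P s t = 1)
    (G : Set S) :
    ∃! x : S → ℝ,
      (∀ s ∈ G, x s = 1) ∧
      (∀ s ∈ {u | ∀ g ∈ G, ¬ Relation.ReflTransGen (fun a b => 0 < P a b) u g},
        x s = 0) ∧
      (∀ s ∉ G ∪ {u | ∀ g ∈ G, ¬ Relation.ReflTransGen (fun a b => 0 < P a b) u g},
        x s = ∑ t, P s t * x t) := by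
  classical
  set Z : Set S := {u | ∀ g ∈ G, ¬ Relation.ReflTransGen (fun a b => 0 < P a b) u g}
  have hGZ : Disjoint G Z := Set.disjoint_left.2 fun g hg hgZ ↦ hgZ g hg .refl
  have hreach : ∀ s, ∃ a ∈ G ∪ Z, Relation.ReflTransGen (fun a b ↦ 0 < P a b) s a := by
    intro s
    by_cases hs : s ∈ Z
    · exact ⟨s, Or.inr hs, .refl⟩
    · obtain ⟨g, hg, hsg⟩ : ∃ g ∈ G, Relation.ReflTransGen (fun a b ↦ 0 < P a b) s g := by
        simpa [Z] using hs
      exact ⟨g, Or.inl hg, hsg⟩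
  simp_rw [← one_sub_zeroRows_mulVec_eq_indicator_iff hGZ]
  exact existsUnique_mulVec_eq (injective_one_sub_zeroRows_mulVec hP0 hP1 hreach) _
end

section
/- Let S be a finite type and P : S → S → ℝ a row-stochastic matrix (all entries nonnegative and each row sums to 1). Let I ⊆ S be a set such that from every s ∈ I some state outside I is reachable via the edge relation having an edge from s to t iff P s t > 0. If y : S → ℝ satisfies y t = 0 for all t ∉ I and y s = ∑_{t ∈ S} P s t * y t for all s ∈ I, then y = 0. -/
/-- homogeneous-system lemma. If from every state of `I` some state
outside `I` is reachable, then the only solution of the homogeneous system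
vanishing outside `I` is zero. -/
theorem homogeneous_system_zero {S : Type*} [Fintype S]
    (P : S → S → ℝ) (hP0 : ∀ s t, 0 ≤ P s t) (hP1 : ∀ s, ∑ t, P s t = 1)
    (I : Set S)
    (hI : ∀ s ∈ I, ∃ t, t ∉ I ∧ Relation.ReflTransGen (fun a b => 0 < P a b) s t)
    (y : S → ℝ) (hy0 : ∀ t ∉ I, y t = 0)
    (hy : ∀ s ∈ I, y s = ∑ t, P s t * y t) :
    y = 0 := by
  rcases isEmpty_or_nonempty S with h | h
  · funext s; exact h.elim s
  obtain ⟨s₀, -, hs₀⟩ := Finset.exists_max_image Finset.univ (fun s => |y s|)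
    ⟨Classical.arbitrary S, Finset.mem_univ _⟩
  set M := |y s₀| with hMdef
  have hM : ∀ s, |y s| ≤ M := fun s => hs₀ s (Finset.mem_univ s)
  have hM0 : 0 ≤ M := (abs_nonneg _).trans (hM s₀)
  -- propagation step
  have step : ∀ s, s ∈ I → |y s| = M → ∀ t, 0 < P s t → |y t| = M := by
    intro s hsI hsM t hPt
    have hsum : ∑ u, P s u * |y u| = M := by
      apply le_antisymm
      · calc ∑ u, P s u * |y u| ≤ ∑ u, P s u * M := by
              refine Finset.sum_le_sum fun u _ =>
                mul_le_mul_of_nonneg_left (hM u) (hP0 s u)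
            _ = M := by rw [← Finset.sum_mul, hP1, one_mul]
      · calc M = |y s| := hsM.symm
            _ = |∑ u, P s u * y u| := by rw [hy s hsI]
            _ ≤ ∑ u, |P s u * y u| := Finset.abs_sum_le_sum_abs _ _
            _ = ∑ u, P s u * |y u| := by
              refine Finset.sum_congr rfl fun u _ => ?_
              rw [abs_mul, abs_of_nonneg (hP0 s u)]
    have hzero : ∑ u, P s u * (M - |y u|) = 0 := by
      have : ∑ u, P s u * (M - |y u|)
          = (∑ u, P s u * M) - ∑ u, P s u * |y u| := by
        rw [← Finset.sum_sub_distrib]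
        exact Finset.sum_congr rfl fun u _ => by ring
      rw [this, ← Finset.sum_mul, hP1, one_mul, hsum, sub_self]
    have hall := (Finset.sum_eq_zero_iff_of_nonneg
      (fun u _ => mul_nonneg (hP0 s u) (sub_nonneg.2 (hM u)))).1 hzero
    have ht := hall t (Finset.mem_univ t)
    have : M - |y t| = 0 := by
      rcases mul_eq_zero.1 ht with h' | h'
      · exact absurd h' (ne_of_gt hPt)
      · exact h'
    linarith
  -- propagation along reachability
  have key : ∀ s t, Relation.ReflTransGen (fun a b => 0 < P a b) s t →
      |y s| = M → |y t| = M ∨ M = 0 := by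
    intro s t hst
    induction hst using Relation.ReflTransGen.head_induction_on with
    | refl => intro h; exact Or.inl h
    | head hab _ ih =>
      rename_i a c _
      intro ha
      by_cases haI : a ∈ I
      · exact ih (step a haI ha c hab)
      · right; rw [← ha, hy0 a haI, abs_zero]
  have hMz : M = 0 := by
    by_cases hs₀I : s₀ ∈ I
    · obtain ⟨t, htI, hreach⟩ := hI s₀ hs₀I
      rcases key s₀ t hreach rfl with h' | h'
      · rw [← h', hy0 t htI, abs_zero]
      · exact h'
    · rw [hMdef, hy0 s₀ hs₀I, abs_zero]
  funext s
  have := hM s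
  rw [hMz] at this
  simpa using abs_nonneg (y s) |>.antisymm this |>.symm ▸ (abs_eq_zero.1 (le_antisymm this (abs_nonneg _)))
end

section
/- Let S be a finite nonempty type, P : S → PMF S a Markov chain transition function, and (μ_s)_{s∈S} a trajectory measure family for (S, P). Let G ⊆ S and define x : S → ℝ by x s = μ_s {ω | ∃ n, ω n ∈ G} (as a real number). Then x s = 1 for all s ∈ G; x s = 0 for all s from which no element of G is reachable via the edge relation having an edge from s to t iff P s t > 0; and x s = ∑_{t ∈ S} (P s t) * x t for all s ∉ G. -/
open scoped ENNReal

/-- A trajectory measure family for a Markov chain with transition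
probabilities `P` (values in `ℝ≥0∞`): a family of probability measures on
trajectories whose values on cylinder sets are products of transition
probabilities. -/
def IsTrajectoryMeasureFamily {X : Type*} [MeasurableSpace X] [DecidableEq X]
    (P : X → X → ℝ≥0∞) (μ : X → MeasureTheory.Measure (ℕ → X)) : Prop :=
  ∀ x : X, MeasureTheory.IsProbabilityMeasure (μ x) ∧
    ∀ (n : ℕ) (f : ℕ → X),
      μ x {ω | ∀ k ≤ n, ω k = f k} =
        if f 0 = x then ∏ k ∈ Finset.range n, P (f k) (f (k + 1)) else 0

open MeasureTheory

/-- Extension of a function on `Fin (n+1)` to `ℕ`. -/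
noncomputable def extFin {S : Type*} [Nonempty S] (n : ℕ) (g : Fin (n + 1) → S) : ℕ → S :=
  fun k => if h : k < n + 1 then g ⟨k, h⟩ else Classical.arbitrary S

lemma extFin_le {S : Type*} [Nonempty S] {n k : ℕ} (hk : k ≤ n) (g : Fin (n + 1) → S) :
    extFin n g k = g ⟨k, Nat.lt_succ_of_le hk⟩ := dif_pos _

/-- The family of point cylinders. -/
def cylSets (S : Type*) : Set (Set (ℕ → S)) :=
  {A | ∃ (n : ℕ) (f : ℕ → S), A = {ω | ∀ k ≤ n, ω k = f k}}

lemma isPiSystem_cylSets (S : Type*) : IsPiSystem (cylSets S) := by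
  rintro A ⟨n, f, rfl⟩ B ⟨m, g, rfl⟩ hne
  obtain ⟨ω₀, hω₀f, hω₀g⟩ := hne
  rcases le_total n m with h | h
  · refine ⟨m, g, ?_⟩
    ext ω
    constructor
    · rintro ⟨-, h2⟩; exact h2
    · intro h2
      refine ⟨fun k hk => ?_, h2⟩
      rw [h2 k (hk.trans h), ← hω₀g k (hk.trans h), hω₀f k hk]
  · refine ⟨n, f, ?_⟩
    ext ω
    constructor
    · rintro ⟨h1, -⟩; exact h1
    · intro h1
      refine ⟨h1, fun k hk => ?_⟩
      rw [h1 k (hk.trans h), ← hω₀f k (hk.trans h), hω₀g k hk]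

lemma measurableSet_pointCyl {S : Type*} [MeasurableSpace S]
    (hms : ∀ A : Set S, MeasurableSet A) (n : ℕ) (f : ℕ → S) :
    MeasurableSet {ω : ℕ → S | ∀ k ≤ n, ω k = f k} := by
  have h : {ω : ℕ → S | ∀ k ≤ n, ω k = f k}
      = ⋂ k ∈ Finset.range (n + 1), (fun ω : ℕ → S => ω k) ⁻¹' {f k} := by
    ext ω
    simp [Nat.lt_succ_iff]
  rw [h]
  exact MeasurableSet.biInter (Finset.range (n + 1)).countable_toSet
    (fun k _ => (measurable_pi_apply k) (hms _))

lemma generateFrom_cylSets (S : Type*) [Fintype S] [Nonempty S] [MeasurableSpace S]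
    (hms : ∀ A : Set S, MeasurableSet A) :
    (inferInstance : MeasurableSpace (ℕ → S)) = MeasurableSpace.generateFrom (cylSets S) := by
  apply le_antisymm
  · have hpoint : ∀ (n : ℕ) (a : S),
        MeasurableSet[MeasurableSpace.generateFrom (cylSets S)] {ω : ℕ → S | ω n = a} := by
      intro n a
      have h : {ω : ℕ → S | ω n = a}
          = ⋃ (g : Fin (n + 1) → S) (_ : g (Fin.last n) = a),
              {ω : ℕ → S | ∀ k ≤ n, ω k = extFin n g k} := by
        ext ω
        simp only [Set.mem_setOf_eq, Set.mem_iUnion]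
        constructor
        · intro hω
          refine ⟨fun i => ω i, by simpa [Fin.last] using hω, fun k hk => ?_⟩
          rw [extFin_le hk]
        · rintro ⟨g, hg, hcyl⟩
          rw [hcyl n le_rfl, extFin_le le_rfl]
          exact hg
      rw [h]
      exact MeasurableSet.iUnion fun g => MeasurableSet.iUnion fun hg =>
        MeasurableSpace.measurableSet_generateFrom ⟨n, extFin n g, rfl⟩
    rw [show (inferInstance : MeasurableSpace (ℕ → S)) = MeasurableSpace.pi from rfl,
      MeasurableSpace.pi]
    refine iSup_le fun n => ?_
    rintro A ⟨A', -, rfl⟩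
    have h : (fun ω : ℕ → S => ω n) ⁻¹' A' = ⋃ a ∈ A', {ω : ℕ → S | ω n = a} := by
      ext ω; simp
    rw [h]
    exact MeasurableSet.biUnion (Set.to_countable _) fun a _ => hpoint n a
  · rw [MeasurableSpace.generateFrom_le_iff]
    rintro A ⟨n, f, rfl⟩
    exact measurableSet_pointCyl hms n f

/-- reachability probabilities of a finite Markov chain satisfy the
standard linear system: they are 1 on the goal set `G`, 0 on states from which
no goal state is reachable, and satisfy the averaging equation elsewhere. -/
theorem reachability_probability_linear_system {S : Type*} [Fintype S]
    [Nonempty S] [DecidableEq S] (P : S → PMF S) (G : Set S) :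
    letI : MeasurableSpace S := ⊤
    ∀ μ : S → MeasureTheory.Measure (ℕ → S),
      IsTrajectoryMeasureFamily (fun a b => P a b) μ →
        (∀ s ∈ G, ((μ s) {ω | ∃ n, ω n ∈ G}).toReal = 1) ∧
        (∀ s : S, (∀ g ∈ G, ¬ Relation.ReflTransGen (fun a b => 0 < P a b) s g) →
          ((μ s) {ω | ∃ n, ω n ∈ G}).toReal = 0) ∧
        (∀ s ∉ G, ((μ s) {ω | ∃ n, ω n ∈ G}).toReal =
          ∑ t : S, (P s t).toReal * ((μ t) {ω | ∃ n, ω n ∈ G}).toReal) := by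
  letI : MeasurableSpace S := ⊤
  intro μ hμ
  classical
  have hms : ∀ A : Set S, MeasurableSet A := fun A => trivial
  have hval : ∀ (x : S) (n : ℕ) (f : ℕ → S),
      μ x {ω | ∀ k ≤ n, ω k = f k} =
        if f 0 = x then ∏ k ∈ Finset.range n, (P (f k)) (f (k + 1)) else 0 :=
    fun x => (hμ x).2
  have hprob : ∀ x, IsProbabilityMeasure (μ x) := fun x => (hμ x).1
  have hzero : ∀ x : S, μ x {ω : ℕ → S | ω 0 = x} = 1 := by
    intro x
    have h := hval x 0 (fun _ => x)
    have hset : {ω : ℕ → S | ∀ k ≤ 0, ω k = (fun _ => x) k} = {ω : ℕ → S | ω 0 = x} := by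
      ext ω
      constructor
      · intro h'; exact h' 0 le_rfl
      · intro h' k hk
        rcases Nat.le_zero.mp hk with rfl
        exact h'
    rw [hset] at h
    simpa using h
  have hEmeas : MeasurableSet {ω : ℕ → S | ∃ n, ω n ∈ G} := by
    have h : {ω : ℕ → S | ∃ n, ω n ∈ G} = ⋃ n, (fun ω : ℕ → S => ω n) ⁻¹' G := by
      ext ω; simp
    rw [h]
    exact MeasurableSet.iUnion fun n => (measurable_pi_apply n) (hms _)
  refine ⟨?_, ?_, ?_⟩
  · -- s ∈ G : probability 1
    intro s hs
    haveI := hprob s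
    have h1 : μ s {ω : ℕ → S | ∃ n, ω n ∈ G} = 1 := by
      refine le_antisymm prob_le_one ?_
      rw [← hzero s]
      exact measure_mono fun ω h => ⟨0, h ▸ hs⟩
    rw [h1]; simp
  · -- unreachable: probability 0
    intro s hs
    suffices h : μ s {ω : ℕ → S | ∃ n, ω n ∈ G} = 0 by rw [h]; simp
    have key : ∀ n : ℕ, μ s ((fun ω : ℕ → S => ω n) ⁻¹' G) = 0 := by
      intro n
      have hcover : (fun ω : ℕ → S => ω n) ⁻¹' G ⊆
          ⋃ (g : Fin (n + 1) → S) (_ : g (Fin.last n) ∈ G),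
            {ω : ℕ → S | ∀ k ≤ n, ω k = extFin n g k} := by
        intro ω hω
        simp only [Set.mem_iUnion]
        refine ⟨fun i => ω i, by simpa [Fin.last] using hω, fun k hk => ?_⟩
        rw [extFin_le hk]
      refine measure_mono_null hcover
        (measure_iUnion_null fun g => measure_iUnion_null fun hg => ?_)
      rw [hval]
      split_ifs with h0
      · by_contra hne
        have hpos : ∀ k < n, 0 < P (extFin n g k) (extFin n g (k + 1)) := by
          intro k hk
          have := Finset.prod_ne_zero_iff.mp hne k (Finset.mem_range.mpr hk)
          exact pos_iff_ne_zero.mpr this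
        have hreach : ∀ m, m ≤ n →
            Relation.ReflTransGen (fun a b => 0 < P a b) s (extFin n g m) := by
          intro m
          induction m with
          | zero => intro _; exact h0 ▸ Relation.ReflTransGen.refl
          | succ m ih =>
            intro hm
            exact (ih (Nat.le_of_succ_le hm)).tail (hpos m hm)
        have hgG : extFin n g n ∈ G := by
          rw [extFin_le le_rfl]
          exact hg
        exact hs _ hgG (hreach n le_rfl)
      · rfl
    have hE : {ω : ℕ → S | ∃ n, ω n ∈ G} = ⋃ n, (fun ω : ℕ → S => ω n) ⁻¹' G := by
      ext ω; simp
    rw [hE]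
    exact measure_iUnion_null key
  · -- averaging equation
    intro s hsG
    set E : Set (ℕ → S) := {ω | ∃ n, ω n ∈ G} with hEdef
    set θ : (ℕ → S) → (ℕ → S) := fun ω k => ω (k + 1) with hθ
    have hθmeas : Measurable θ := measurable_pi_iff.mpr fun n => measurable_pi_apply (n + 1)
    set B : S → Set (ℕ → S) := fun t => {ω | ω 0 = s ∧ ω 1 = t} with hB
    have hBmeas : ∀ t, MeasurableSet (B t) := by
      intro t
      have h : B t = (fun ω : ℕ → S => ω 0) ⁻¹' {s} ∩ (fun ω : ℕ → S => ω 1) ⁻¹' {t} := by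
        ext ω; simp [hB]
      rw [h]
      exact ((measurable_pi_apply 0) (hms _)).inter ((measurable_pi_apply 1) (hms _))
    have hBval : ∀ t, μ s (B t) = P s t := by
      intro t
      have h := hval s 1 (fun k => if k = 0 then s else t)
      have hset : {ω : ℕ → S | ∀ k ≤ 1, ω k = (fun k => if k = 0 then s else t) k} = B t := by
        ext ω
        constructor
        · intro h'
          exact ⟨by simpa using h' 0 (by norm_num), by simpa using h' 1 le_rfl⟩
        · rintro ⟨h0, h1⟩ k hk
          interval_cases k <;> simp [h0, h1]
      rw [hset] at h
      simpa using h
    have hkey : ∀ t : S, Measure.map θ ((μ s).restrict (B t)) = (P s t : ℝ≥0∞) • μ t := by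
      intro t
      haveI := hprob t
      haveI : IsFiniteMeasure ((P s t : ℝ≥0∞) • μ t) := by
        refine ⟨?_⟩
        rw [Measure.smul_apply, smul_eq_mul, measure_univ, mul_one]
        exact lt_of_le_of_lt (PMF.coe_le_one _ _) ENNReal.one_lt_top
      refine ext_of_generate_finite (cylSets S) (generateFrom_cylSets S hms) (isPiSystem_cylSets S)
        ?_ ?_
      · rintro A ⟨n, f, rfl⟩
        rw [Measure.map_apply hθmeas (measurableSet_pointCyl hms n f),
          Measure.restrict_apply (hθmeas (measurableSet_pointCyl hms n f))]
        by_cases hf0 : f 0 = t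
        · -- θ⁻¹ cyl ∩ B t is the cylinder for g = s :: f
          set g : ℕ → S := fun k => Nat.rec s (fun k _ => f k) k with hg
          have hset : θ ⁻¹' {ω : ℕ → S | ∀ k ≤ n, ω k = f k} ∩ B t
              = {ω : ℕ → S | ∀ k ≤ n + 1, ω k = g k} := by
            ext ω
            simp only [Set.mem_inter_iff, Set.mem_preimage, Set.mem_setOf_eq, hB, hθ]
            constructor
            · rintro ⟨hcyl, h0, h1⟩ k hk
              cases k with
              | zero => exact h0
              | succ m => exact hcyl m (Nat.succ_le_succ_iff.mp hk)
            · intro hcyl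
              refine ⟨fun k hk => hcyl (k + 1) (Nat.succ_le_succ hk), hcyl 0 (Nat.zero_le _), ?_⟩
              rw [hcyl 1 (Nat.succ_le_succ (Nat.zero_le _))]
              exact hf0
          rw [hset, hval]
          have hg0 : g 0 = s := rfl
          rw [if_pos hg0]
          have hμtcyl : μ t {ω : ℕ → S | ∀ k ≤ n, ω k = f k}
              = ∏ k ∈ Finset.range n, (P (f k)) (f (k + 1)) := by
            rw [hval, if_pos hf0]
          rw [Measure.smul_apply, smul_eq_mul, hμtcyl]
          rw [Finset.prod_range_succ']
          have hstep : ∀ k, (P (g (k + 1))) (g (k + 1 + 1)) = (P (f k)) (f (k + 1)) := fun k => rfl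
          have h0 : (P (g 0)) (g (0 + 1)) = (P s) t := by
            show (P s) (f 0) = (P s) t
            rw [hf0]
          rw [h0, mul_comm]
        · -- disjoint: measure 0 on both sides
          have hset : θ ⁻¹' {ω : ℕ → S | ∀ k ≤ n, ω k = f k} ∩ B t = ∅ := by
            ext ω
            simp only [Set.mem_inter_iff, Set.mem_preimage, Set.mem_setOf_eq, hB, hθ,
              Set.mem_empty_iff_false, iff_false, not_and]
            intro hcyl h0 h1
            exact hf0 (by rw [← hcyl 0 (Nat.zero_le _), h1])
          rw [hset, measure_empty, Measure.smul_apply, smul_eq_mul, hval, if_neg hf0, mul_zero]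
      · rw [Measure.map_apply hθmeas MeasurableSet.univ,
          Measure.restrict_apply (hθmeas MeasurableSet.univ)]
        simp only [Set.preimage_univ, Set.univ_inter]
        rw [hBval t, Measure.smul_apply, smul_eq_mul, measure_univ, mul_one]
    have hμE : ∀ t, μ s (θ ⁻¹' E ∩ B t) = P s t * μ t E := by
      intro t
      have h1 : Measure.map θ ((μ s).restrict (B t)) E = (P s t : ℝ≥0∞) • μ t E := by
        rw [hkey t]; rfl
      rw [Measure.map_apply hθmeas hEmeas, Measure.restrict_apply (hθmeas hEmeas)] at h1
      simpa [smul_eq_mul] using h1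
    have hshift : ∀ t, E ∩ B t = θ ⁻¹' E ∩ B t := by
      intro t
      ext ω
      simp only [Set.mem_inter_iff, hB, hθ, hEdef, Set.mem_setOf_eq, Set.mem_preimage]
      constructor
      · rintro ⟨⟨n, hn⟩, h0, h1⟩
        refine ⟨?_, h0, h1⟩
        cases n with
        | zero => exact absurd (h0 ▸ hn) hsG
        | succ m => exact ⟨m, hn⟩
      · rintro ⟨⟨n, hn⟩, h0, h1⟩
        exact ⟨⟨n + 1, hn⟩, h0, h1⟩
    have hfull : μ s E = μ s (E ∩ {ω : ℕ → S | ω 0 = s}) := by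
      haveI := hprob s
      have hFmeas : MeasurableSet {ω : ℕ → S | ω 0 = s} := by
        have h : {ω : ℕ → S | ω 0 = s} = (fun ω : ℕ → S => ω 0) ⁻¹' {s} := rfl
        rw [h]
        exact (measurable_pi_apply 0) (hms _)
      have hc : μ s {ω : ℕ → S | ω 0 = s}ᶜ = 0 := by
        rw [measure_compl hFmeas (measure_ne_top _ _), hzero s, measure_univ, tsub_self]
      have := measure_inter_add_diff E hFmeas (μ := μ s)
      have hd : μ s (E \ {ω : ℕ → S | ω 0 = s}) = 0 :=
        measure_mono_null (fun ω hω => hω.2) hc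
      rw [← this, hd, add_zero]
    have hdecomp : E ∩ {ω : ℕ → S | ω 0 = s} = ⋃ t : S, E ∩ B t := by
      ext ω
      simp only [Set.mem_inter_iff, Set.mem_setOf_eq, Set.mem_iUnion, hB]
      constructor
      · rintro ⟨hE', h0⟩; exact ⟨ω 1, hE', h0, rfl⟩
      · rintro ⟨t, hE', h0, -⟩; exact ⟨hE', h0⟩
    have hdisj : Pairwise (Function.onFun Disjoint fun t => E ∩ B t) := by
      intro a b hab
      refine Set.disjoint_left.mpr ?_
      rintro ω ⟨-, -, h1⟩ ⟨-, -, h1'⟩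
      exact hab (h1 ▸ h1')
    have hsum : μ s E = ∑ t : S, P s t * μ t E := by
      rw [hfull, hdecomp, measure_iUnion hdisj (fun t => hEmeas.inter (hBmeas t)), tsum_fintype]
      exact Finset.sum_congr rfl fun t _ => by rw [hshift t, hμE t]
    rw [hsum, ENNReal.toReal_sum]
    · exact Finset.sum_congr rfl fun t _ => ENNReal.toReal_mul
    · intro t _
      haveI := hprob t
      exact ENNReal.mul_ne_top (PMF.apply_ne_top _ _) (measure_ne_top _ _)
end

section
/- Let S be a finite nonempty type, P : S → PMF S a Markov chain transition function, and (μ_s)_{s∈S} a trajectory measure family for (S, P). Then for every s ∈ S, for μ_s-almost every trajectory ω : ℕ → S there exists N ∈ ℕ such that: (i) for all n ≥ N, ω n lies in the SCC of ω N (i.e., ω n and ω N are mutually reachable); (ii) the SCC of ω N is terminal; and (iii) for every state c in the SCC of ω N, the set {n | ω n = c} is infinite. -/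
open scoped ENNReal

/-- The strongly connected component of a vertex `v`. -/
def SCC {V : Type*} (E : V → V → Prop) (v : V) : Set V :=
  {w | Relation.ReflTransGen E v w ∧ Relation.ReflTransGen E w v}

/-!
Almost surely every step of the trajectory follows an edge of positive probability, and for every
edge `x → y` with `P x y > 0`, if `x` is visited infinitely often then so is `y`: by the Markov
property at time 1, each visit to `x` fails to continue to `y` with probability `1 - P x y` given
the past, so the probability of seeing `j` visits to `x` after a given time and no step `x → y`
is at most `(1 - P x y) ^ j`.

On such a path in a finite graph the states visited infinitely often are closed under edges and
pairwise connected by segments of the path, and the path eventually stays among them. From that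
time on they form the SCC of the current state, and this SCC is terminal.
-/

open MeasureTheory ProbabilityTheory Filter Set

lemma MeasureTheory.Measure.ext_of_map_frestrictLe {X : ℕ → Type*} [∀ n, MeasurableSpace (X n)]
    {μ ν : Measure (Π n, X n)} [IsFiniteMeasure μ]
    (h : ∀ n, μ.map (Preorder.frestrictLe n) = ν.map (Preorder.frestrictLe n)) : μ = ν := by
  have hμ := isProjectiveLimit_map (P := μ) (X := fun n ω => ω n) aemeasurable_id
  have hν : IsProjectiveLimit ν fun I => μ.map fun ω => I.restrict ω :=
    (isProjectiveLimit_nat_iff (isProjectiveMeasureFamily_map_restrict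
      fun n => (measurable_pi_apply n).aemeasurable) ν).2 fun n => (h n).symm
  simpa using hμ.unique hν

lemma MeasureTheory.Measure.ext_of_cylinder {S : Type*} [MeasurableSpace S] [Countable S]
    [MeasurableSingletonClass S] {μ ν : Measure (ℕ → S)} [IsFiniteMeasure μ]
    (h : ∀ n (f : ℕ → S), μ {ω | ∀ k ≤ n, ω k = f k} = ν {ω | ∀ k ≤ n, ω k = f k}) :
    μ = ν := by
  refine Measure.ext_of_map_frestrictLe fun n => Measure.ext_iff_singleton.2 fun g => ?_
  obtain ⟨f, rfl⟩ : ∃ f : ℕ → S, Preorder.frestrictLe n f = g :=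
    ⟨fun k => if hk : k ≤ n then g ⟨k, Finset.mem_Iic.2 hk⟩ else g ⟨0, by simp⟩,
      funext fun k => by simp [Finset.mem_Iic.1 k.2]⟩
  have hcyl : Preorder.frestrictLe n ⁻¹' ({Preorder.frestrictLe n f} : Set (Finset.Iic n → S)) =
      {ω | ∀ k ≤ n, ω k = f k} := by
    ext ω
    simp [funext_iff]
  rw [Measure.map_apply (Preorder.measurable_frestrictLe n) (measurableSet_singleton _),
    Measure.map_apply (Preorder.measurable_frestrictLe n) (measurableSet_singleton _), hcyl, h]

def shift {α : Type*} (ω : ℕ → α) : ℕ → α := fun n => ω (n + 1)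

lemma measurable_shift {α : Type*} [MeasurableSpace α] : Measurable (shift (α := α)) :=
  measurable_pi_lambda _ fun n => measurable_pi_apply (n + 1)

lemma shift_iterate_apply {α : Type*} (ω : ℕ → α) (k n : ℕ) : shift^[k] ω n = ω (n + k) := by
  induction k generalizing ω with
  | zero => rfl
  | succ k ih => rw [Function.iterate_succ_apply, ih]; rfl

section Measurability

variable {S : Type*} [MeasurableSpace S] [MeasurableSingletonClass S]

lemma measurableSet_apply_eq (k : ℕ) (c : S) : MeasurableSet {ω : ℕ → S | ω k = c} :=
  (measurableSet_singleton c).preimage (measurable_pi_apply k)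

lemma measurableSet_of_forall_le_eq [Countable S] {A : Set (ℕ → S)} (n : ℕ)
    (hA : ∀ ω ω', (∀ k ≤ n, ω k = ω' k) → ω ∈ A → ω' ∈ A) : MeasurableSet A := by
  have hpre : Preorder.frestrictLe n ⁻¹' (Preorder.frestrictLe n '' A) = A := by
    refine Subset.antisymm (fun ω ⟨ω', hω', he⟩ => hA ω' ω (fun k hk => ?_) hω')
      (subset_preimage_image _ _)
    exact congrFun he ⟨k, Finset.mem_Iic.2 hk⟩
  rw [← hpre]
  exact (Set.to_countable _).measurableSet.preimage (Preorder.measurable_frestrictLe n)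

end Measurability

def visitsWithoutStep {S : Type*} [DecidableEq S] (x y : S) (j n : ℕ) : Set (ℕ → S) :=
  {ω | j ≤ Nat.count (fun k => ω k = x) n ∧ ∀ k < n, ω k = x → ω (k + 1) ≠ y}

section VisitsWithoutStep

variable {S : Type*} [DecidableEq S] {x y : S} {j n : ℕ} {ω : ℕ → S}

lemma shift_mem_visitsWithoutStep_of_apply_zero_eq
    (hω : ω ∈ visitsWithoutStep x y (j + 1) (n + 1)) (h0 : ω 0 = x) :
    ω 1 ≠ y ∧ shift ω ∈ visitsWithoutStep x y j n := by
  obtain ⟨hcount, hstep⟩ := hω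
  rw [Nat.count_succ', if_pos h0] at hcount
  exact ⟨hstep 0 n.succ_pos h0, Nat.le_of_succ_le_succ hcount,
    fun k hk => hstep (k + 1) (by omega)⟩

lemma shift_mem_visitsWithoutStep_of_apply_zero_ne
    (hω : ω ∈ visitsWithoutStep x y j (n + 1)) (h0 : ω 0 ≠ x) :
    shift ω ∈ visitsWithoutStep x y j n := by
  obtain ⟨hcount, hstep⟩ := hω
  rw [Nat.count_succ', if_neg h0] at hcount
  exact ⟨hcount, fun k hk => hstep (k + 1) (by omega)⟩

lemma measurableSet_visitsWithoutStep [MeasurableSpace S] [MeasurableSingletonClass S]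
    [Countable S] (x y : S) (j n : ℕ) : MeasurableSet (visitsWithoutStep x y j n) := by
  refine measurableSet_of_forall_le_eq n fun ω ω' h ⟨hcount, hstep⟩ => ⟨?_, fun k hk => ?_⟩
  · simp only [Nat.count_eq_card_filter_range] at hcount ⊢
    rwa [Finset.filter_congr fun k hk => by rw [← h k (Finset.mem_range.1 hk).le]]
  · rw [← h k hk.le, ← h (k + 1) hk]
    exact hstep k hk

end VisitsWithoutStep

lemma PMF.tsum_indicator_compl_singleton {S : Type*} (p : PMF S) (y : S) :
    ∑' b, ({y}ᶜ : Set S).indicator p b = 1 - p y := by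
  have hsplit := ENNReal.tsum_eq_add_tsum_ite (f := p) y
  rw [p.tsum_coe, add_comm] at hsplit
  rw [← ENNReal.eq_sub_of_add_eq (p.apply_ne_top y) hsplit.symm]
  refine tsum_congr fun b => ?_
  by_cases hb : b = y <;> simp [hb]

namespace IsTrajectoryMeasureFamily

variable {S : Type*} [MeasurableSpace S] [MeasurableSingletonClass S] [DecidableEq S]
  {P : S → PMF S} {μ : S → Measure (ℕ → S)}

lemma ae_apply_zero_eq (hμ : IsTrajectoryMeasureFamily (fun a b => P a b) μ) (a : S) :
    ∀ᵐ ω ∂μ a, ω 0 = a := by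
  have := (hμ a).1
  have h := (hμ a).2 0 fun _ => a
  simp only [nonpos_iff_eq_zero, forall_eq, if_true, Finset.range_zero, Finset.prod_empty] at h
  rw [ae_iff_measure_eq (measurableSet_apply_eq 0 a).nullMeasurableSet, h, measure_univ]

variable [Countable S]

lemma map_shift (hμ : IsTrajectoryMeasureFamily (fun a b => P a b) μ) (a : S) :
    (μ a).map shift = Measure.sum fun b => P a b • μ b := by
  have := (hμ a).1
  have hcyl (n : ℕ) (f : ℕ → S) : MeasurableSet {ω : ℕ → S | ∀ k ≤ n, ω k = f k} :=
    measurableSet_of_forall_le_eq n fun ω ω' h hω k hk => h k hk ▸ hω k hk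
  refine Measure.ext_of_cylinder fun n f => ?_
  -- the path `a, f 0, f 1, …`
  set g : ℕ → S := fun k => Nat.rec a (fun i _ => f i) k
  have hg : shift ⁻¹' {ω | ∀ k ≤ n, ω k = f k} =ᵐ[μ a] {ω | ∀ k ≤ n + 1, ω k = g k} := by
    filter_upwards [hμ.ae_apply_zero_eq a] with ω hω
    refine propext ⟨fun h k hk => ?_, fun h k hk => h (k + 1) (by omega)⟩
    cases k with
    | zero => exact hω
    | succ k => exact h k (by omega)
  rw [Measure.map_apply measurable_shift (hcyl n f), measure_congr hg,
    (hμ a).2, Measure.sum_apply _ (hcyl n f)]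
  simp only [Measure.smul_apply, smul_eq_mul, (hμ _).2, mul_ite, mul_zero]
  rw [tsum_eq_single (f 0) fun b hb => if_neg (Ne.symm hb), Finset.prod_range_succ']
  simp [g, mul_comm]

lemma measure_le_tsum_of_shift_mem (hμ : IsTrajectoryMeasureFamily (fun a b => P a b) μ)
    (a : S) {A B : Set (ℕ → S)} (hB : MeasurableSet B) (hAB : ∀ ω ∈ A, ω 0 = a → shift ω ∈ B) :
    μ a A ≤ ∑' b, P a b * μ b B :=
  calc μ a A ≤ μ a (shift ⁻¹' B) := by
        refine measure_mono_ae ?_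
        filter_upwards [hμ.ae_apply_zero_eq a] with ω h0 hω using hAB ω hω h0
    _ = (μ a).map shift B := (Measure.map_apply measurable_shift hB).symm
    _ = ∑' b, P a b * μ b B := by rw [hμ.map_shift, Measure.sum_apply _ hB]; rfl

lemma ae_comp_shift (hμ : IsTrajectoryMeasureFamily (fun a b => P a b) μ) {a : S}
    {p : (ℕ → S) → Prop} (h : ∀ b, P a b ≠ 0 → ∀ᵐ ω ∂μ b, p ω) : ∀ᵐ ω ∂μ a, p (shift ω) := by
  refine ae_of_ae_map measurable_shift.aemeasurable ?_
  rw [hμ.map_shift, Measure.ae_sum_iff]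
  intro b
  by_cases hb : P a b = 0
  · simp [hb]
  · exact Measure.ae_smul_measure (h b hb) _

lemma ae_comp_shift_iterate (hμ : IsTrajectoryMeasureFamily (fun a b => P a b) μ)
    {p : (ℕ → S) → Prop} (h : ∀ b, ∀ᵐ ω ∂μ b, p ω) (k : ℕ) (a : S) :
    ∀ᵐ ω ∂μ a, p (shift^[k] ω) := by
  induction k generalizing a with
  | zero => exact h a
  | succ k ih => simpa only [Function.iterate_succ_apply] using hμ.ae_comp_shift fun b _ => ih b

lemma ae_step_pos (hμ : IsTrajectoryMeasureFamily (fun a b => P a b) μ) (a : S) :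
    ∀ᵐ ω ∂μ a, ∀ k, 0 < P (ω k) (ω (k + 1)) := by
  have hfirst b : ∀ᵐ ω ∂μ b, 0 < P (ω 0) (ω 1) := by
    have hnext : ∀ᵐ ω ∂μ b, P b (shift ω 0) ≠ 0 := hμ.ae_comp_shift fun c hc =>
      (hμ.ae_apply_zero_eq c).mono fun ω hω => hω ▸ hc
    filter_upwards [hμ.ae_apply_zero_eq b, hnext] with ω h0 h1
    exact h0 ▸ pos_iff_ne_zero.2 h1
  refine ae_all_iff.2 fun k => (hμ.ae_comp_shift_iterate hfirst k a).mono fun ω hω => ?_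
  simpa [shift_iterate_apply, add_comm] using hω

lemma measure_visitsWithoutStep_le (hμ : IsTrajectoryMeasureFamily (fun a b => P a b) μ)
    (x y : S) (n : ℕ) : ∀ j a, μ a (visitsWithoutStep x y j n) ≤ (1 - P x y) ^ j := by
  have := fun a => (hμ a).1
  induction n with
  | zero =>
    rintro (_ | j) a
    · exact (pow_zero (1 - P x y)).symm ▸ prob_le_one
    · simp [visitsWithoutStep]
  | succ n ih =>
    rintro (_ | j) a
    · exact (pow_zero (1 - P x y)).symm ▸ prob_le_one
    by_cases hax : a = x
    · subst hax
      calc μ a (visitsWithoutStep a y (j + 1) (n + 1))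
          ≤ ∑' b, P a b * μ b {ω | ω 0 ≠ y ∧ ω ∈ visitsWithoutStep a y j n} :=
            hμ.measure_le_tsum_of_shift_mem a
              ((measurableSet_apply_eq 0 y).compl.inter (measurableSet_visitsWithoutStep a y j n))
              fun ω hω h0 => shift_mem_visitsWithoutStep_of_apply_zero_eq hω h0
        _ ≤ ∑' b, ({y}ᶜ : Set S).indicator (P a) b * (1 - P a y) ^ j := by
            refine ENNReal.tsum_le_tsum fun b => ?_
            by_cases hby : b = y
            · subst hby
              rw [measure_mono_null (fun ω hω => hω.1) (ae_iff.1 (hμ.ae_apply_zero_eq b))]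
              simp
            · rw [indicator_of_mem hby]
              gcongr
              exact (measure_mono fun ω hω => hω.2).trans (ih j b)
        _ = (1 - P a y) ^ (j + 1) := by
            rw [ENNReal.tsum_mul_right, PMF.tsum_indicator_compl_singleton, pow_succ']
    · calc μ a (visitsWithoutStep x y (j + 1) (n + 1))
          ≤ ∑' b, P a b * μ b (visitsWithoutStep x y (j + 1) n) :=
            hμ.measure_le_tsum_of_shift_mem a (measurableSet_visitsWithoutStep x y (j + 1) n)
              fun ω hω h0 => shift_mem_visitsWithoutStep_of_apply_zero_ne hω (h0 ▸ hax)
        _ ≤ ∑' b, P a b * (1 - P x y) ^ (j + 1) :=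
            ENNReal.tsum_le_tsum fun b => by gcongr; exact ih (j + 1) b
        _ = (1 - P x y) ^ (j + 1) := by
            rw [ENNReal.tsum_mul_right, (P a).tsum_coe, one_mul]

lemma ae_exists_step_of_frequently (hμ : IsTrajectoryMeasureFamily (fun a b => P a b) μ)
    {x y : S} (hxy : 0 < P x y) (a : S) :
    ∀ᵐ ω ∂μ a, (∃ᶠ k in atTop, ω k = x) → ∃ k, ω k = x ∧ ω (k + 1) = y := by
  have := (hμ a).1
  set F := {ω : ℕ → S | (∃ᶠ k in atTop, ω k = x) ∧ ∀ k, ω k = x → ω (k + 1) ≠ y}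
  have hle (j : ℕ) : μ a F ≤ (1 - P x y) ^ j := by
    have hF : F = ⋃ n, F ∩ {ω | j ≤ Nat.count (fun k => ω k = x) n} := by
      refine Subset.antisymm
        (fun ω hω => mem_iUnion_of_mem (Nat.nth (fun k => ω k = x) j) ⟨hω, ?_⟩)
        (iUnion_subset fun n => inter_subset_left)
      rw [mem_ofPred_eq, Nat.count_nth_of_infinite (Nat.frequently_atTop_iff_infinite.1 hω.1)]
    have hmono : Monotone fun n => F ∩ {ω | j ≤ Nat.count (fun k => ω k = x) n} :=
      fun n m hnm => inter_subset_inter_right _ fun ω hω => hω.trans (Nat.count_monotone _ hnm)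
    rw [hF, hmono.measure_iUnion]
    refine iSup_le fun n => (measure_mono ?_).trans (hμ.measure_visitsWithoutStep_le x y n j a)
    exact fun ω hω => ⟨hω.2, fun k _ => hω.1.2 k⟩
  have hlt : 1 - P x y < 1 := ENNReal.sub_lt_self ENNReal.one_ne_top one_ne_zero hxy.ne'
  have hF : μ a F = 0 :=
    le_antisymm (ge_of_tendsto' (ENNReal.tendsto_pow_atTop_nhds_zero_of_lt_one hlt) hle) zero_le
  refine measure_mono_null (fun ω (hω : ¬(_ → _)) => ?_) hF
  obtain ⟨hx, hno⟩ := Classical.not_imp.1 hω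
  exact ⟨hx, fun k hk hky => hno ⟨k, hk, hky⟩⟩

lemma ae_frequently_of_frequently (hμ : IsTrajectoryMeasureFamily (fun a b => P a b) μ) (a : S) :
    ∀ᵐ ω ∂μ a, ∀ x y, 0 < P x y → (∃ᶠ k in atTop, ω k = x) → ∃ᶠ k in atTop, ω k = y := by
  refine ae_all_iff.2 fun x => ae_all_iff.2 fun y => ?_
  by_cases hxy : 0 < P x y
  swap
  · exact ae_of_all _ fun ω h => absurd h hxy
  filter_upwards [ae_all_iff.2 fun M =>
    hμ.ae_comp_shift_iterate (fun b => hμ.ae_exists_step_of_frequently hxy b) M a] with ω hω _ hx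
  refine frequently_atTop.2 fun M => ?_
  obtain ⟨k, -, hk⟩ := hω M <| frequently_atTop.2 fun N => by
    obtain ⟨k, hk, hkx⟩ := frequently_atTop.1 hx (N + M)
    exact ⟨k - M, by omega, by rwa [shift_iterate_apply, Nat.sub_add_cancel (by omega)]⟩
  rw [shift_iterate_apply] at hk
  exact ⟨k + 1 + M, by omega, hk⟩

end IsTrajectoryMeasureFamily

section FrequentlyVisited

variable {S : Type*} {E : S → S → Prop} {ω : ℕ → S}

lemma eventually_frequently_apply_eq [Finite S] (ω : ℕ → S) :
    ∀ᶠ n in atTop, ∃ᶠ k in atTop, ω k = ω n := by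
  have h (c : S) : ∀ᶠ n in atTop, (∃ᶠ k in atTop, ω k = c) ∨ ω n ≠ c := by
    by_cases hc : ∃ᶠ k in atTop, ω k = c
    · exact Eventually.of_forall fun _ => Or.inl hc
    · exact (not_frequently.1 hc).mono fun _ => Or.inr
  filter_upwards [eventually_all.2 h] with n hn
  exact (hn (ω n)).resolve_right (not_not.2 rfl)

lemma reflTransGen_of_frequently (hpath : ∀ k, E (ω k) (ω (k + 1))) {c d : S}
    (hc : ∃ᶠ k in atTop, ω k = c) (hd : ∃ᶠ k in atTop, ω k = d) : Relation.ReflTransGen E c d := by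
  obtain ⟨m, rfl⟩ := hc.exists
  obtain ⟨n, hmn, rfl⟩ := frequently_atTop.1 hd m
  exact Nat.rel_of_forall_rel_succ_of_le _ (fun k => .single (hpath k)) hmn

lemma frequently_of_reflTransGen
    (hstep : ∀ x y, E x y → (∃ᶠ k in atTop, ω k = x) → ∃ᶠ k in atTop, ω k = y) {c d : S}
    (h : Relation.ReflTransGen E c d) (hc : ∃ᶠ k in atTop, ω k = c) : ∃ᶠ k in atTop, ω k = d := by
  induction h with
  | refl => exact hc
  | tail _ he ih => exact hstep _ _ he ih

theorem exists_terminal_scc_of_frequently [Finite S] (hpath : ∀ k, E (ω k) (ω (k + 1)))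
    (hstep : ∀ x y, E x y → (∃ᶠ k in atTop, ω k = x) → ∃ᶠ k in atTop, ω k = y) :
    ∃ N, (∀ n ≥ N, ω n ∈ SCC E (ω N)) ∧
      (∀ a ∈ SCC E (ω N), ∀ b, Relation.ReflTransGen E a b → b ∈ SCC E (ω N)) ∧
      (∀ c ∈ SCC E (ω N), {n | ω n = c}.Infinite) := by
  obtain ⟨N, hN⟩ := eventually_atTop.1 (eventually_frequently_apply_eq ω)
  have hSCC : SCC E (ω N) = {c | ∃ᶠ k in atTop, ω k = c} := by
    ext c
    refine ⟨fun hc => frequently_of_reflTransGen hstep hc.1 (hN N le_rfl), fun hc => ?_⟩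
    exact ⟨reflTransGen_of_frequently hpath (hN N le_rfl) hc,
      reflTransGen_of_frequently hpath hc (hN N le_rfl)⟩
  refine ⟨N, ?_⟩
  simp only [hSCC, mem_ofPred_eq]
  exact ⟨hN, fun a ha b hab => frequently_of_reflTransGen hstep hab ha,
    fun c hc => Nat.frequently_atTop_iff_infinite.1 hc⟩

end FrequentlyVisited

theorem ae_trajectory_terminal_scc_general {S : Type*} [Fintype S]
    [DecidableEq S] (P : S → PMF S) :
    letI : MeasurableSpace S := ⊤
    ∀ μ : S → MeasureTheory.Measure (ℕ → S),
      IsTrajectoryMeasureFamily (fun a b => P a b) μ →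
      ∀ s : S, ∀ᵐ ω ∂ (μ s), ∃ N : ℕ,
        (∀ n ≥ N, ω n ∈ SCC (fun a b => 0 < P a b) (ω N)) ∧
        (∀ a ∈ SCC (fun a b => 0 < P a b) (ω N), ∀ b,
          Relation.ReflTransGen (fun a b => 0 < P a b) a b →
            b ∈ SCC (fun a b => 0 < P a b) (ω N)) ∧
        (∀ c ∈ SCC (fun a b => 0 < P a b) (ω N), {n | ω n = c}.Infinite) := by
  intro μ hμ s
  let : MeasurableSpace S := ⊤
  filter_upwards [hμ.ae_step_pos s, hμ.ae_frequently_of_frequently s] with ω hpath hstep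
  exact exists_terminal_scc_of_frequently hpath hstep

/-- almost every trajectory of a finite Markov chain eventually
enters a terminal SCC, stays in it forever, and visits each of its states
infinitely often. -/
theorem ae_trajectory_terminal_scc {S : Type*} [Fintype S] [Nonempty S]
    [DecidableEq S] (P : S → PMF S) :
    letI : MeasurableSpace S := ⊤
    ∀ μ : S → MeasureTheory.Measure (ℕ → S),
      IsTrajectoryMeasureFamily (fun a b => P a b) μ →
      ∀ s : S, ∀ᵐ ω ∂ (μ s), ∃ N : ℕ,
        (∀ n ≥ N, ω n ∈ SCC (fun a b => 0 < P a b) (ω N)) ∧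
        (∀ a ∈ SCC (fun a b => 0 < P a b) (ω N), ∀ b,
          Relation.ReflTransGen (fun a b => 0 < P a b) a b →
            b ∈ SCC (fun a b => 0 < P a b) (ω N)) ∧
        (∀ c ∈ SCC (fun a b => 0 < P a b) (ω N), {n | ω n = c}.Infinite) :=
  ae_trajectory_terminal_scc_general P
end

section
/- Let S be a finite nonempty type, P : S → PMF S a Markov chain transition function, (μ_s)_{s∈S} a trajectory measure family for (S, P), and Acc a finite set of pairs (E, F) of subsets of S. Then for every s ∈ S, for μ_s-almost every trajectory ω : ℕ → S, the Rabin condition holds for ω (there exists (E, F) ∈ Acc such that {n | ω n ∈ E} is finite and {n | ω n ∈ F} is infinite) if and only if there exists n such that the SCC of ω n is terminal and there exists (E, F) ∈ Acc with SCC(ω n) ∩ E = ∅ and SCC(ω n) ∩ F ≠ ∅. -/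
open scoped ENNReal

open MeasureTheory Filter

/-!
Almost surely every step of the trajectory follows an edge, and a state `x` that is visited
infinitely often passes this on to each successor `y`: by Lévy's extension of the
Borel–Cantelli lemma, `y` is visited infinitely often iff `∑ₖ P (ω k) y = ∞`, since
`P (ω k) y` is the conditional probability of being at `y` at time `k + 1`.
On such a trajectory the set `V` of states visited infinitely often contains all but finitely
many `ω n`, is closed under reachability and is strongly connected, hence it is the SCC of each
of its members and the only terminal SCC along the trajectory; the Rabin condition for `Acc`
says exactly that `V` is accepting.
-/

section Reachability

variable {S : Type*} {E : S → S → Prop}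

def IsTerminal (E : S → S → Prop) (C : Set S) : Prop :=
  ∀ a ∈ C, ∀ b, Relation.ReflTransGen E a b → b ∈ C

lemma scc_eq_of_mem {a b : S} (hb : b ∈ SCC E a) : SCC E b = SCC E a := by
  ext c
  exact ⟨fun hc => ⟨hb.1.trans hc.1, hc.2.trans hb.2⟩,
    fun hc => ⟨hb.2.trans hc.1, hc.2.trans hb.1⟩⟩

def infinitelyVisited (ω : ℕ → S) : Set S := {a | {n | ω n = a}.Infinite}

variable {ω : ℕ → S}

lemma infinite_setOf_mem_iff [Finite S] {T : Set S} :
    {n | ω n ∈ T}.Infinite ↔ (infinitelyVisited ω ∩ T).Nonempty := by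
  refine ⟨fun h => ?_, fun ⟨a, ha, haT⟩ =>
    ha.mono fun n (hn : ω n = a) => show ω n ∈ T by rwa [hn]⟩
  by_contra hT
  refine h (((Set.toFinite T).biUnion fun a ha => ?_).subset fun n hn =>
    Set.mem_biUnion (t := fun a => {n | ω n = a}) hn rfl)
  exact Set.not_infinite.1 fun hinf => hT ⟨a, hinf, ha⟩

lemma eventually_mem_infinitelyVisited [Finite S] :
    ∀ᶠ n in atTop, ω n ∈ infinitelyVisited ω := by
  rw [← Nat.cofinite_eq_atTop, eventually_cofinite, ← Set.not_infinite]
  exact (infinite_setOf_mem_iff (T := (infinitelyVisited ω)ᶜ)).not.2 (by simp)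

lemma reflTransGen_of_le (hstep : ∀ n, E (ω n) (ω (n + 1))) {n m : ℕ} (h : n ≤ m) :
    Relation.ReflTransGen E (ω n) (ω m) := by
  induction m, h using Nat.le_induction with
  | base => exact .refl
  | succ m _ ih => exact ih.tail (hstep m)

lemma reflTransGen_of_mem_infinitelyVisited (hstep : ∀ n, E (ω n) (ω (n + 1))) {a b : S}
    (ha : a ∈ infinitelyVisited ω) (hb : b ∈ infinitelyVisited ω) :
    Relation.ReflTransGen E a b := by
  obtain ⟨n, rfl⟩ := ha.nonempty
  obtain ⟨m, rfl, hnm⟩ := hb.exists_gt n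
  exact reflTransGen_of_le hstep hnm.le

lemma isTerminal_infinitelyVisited
    (hinf : ∀ x y, E x y → {n | ω n = x}.Infinite → {n | ω n = y}.Infinite) :
    IsTerminal E (infinitelyVisited ω) := fun a ha b hab => by
  induction hab with
  | refl => exact ha
  | tail _ hbc ih => exact hinf _ _ hbc ih

lemma rabin_iff_infinitelyVisited [Finite S] (Acc : Set (Set S × Set S)) :
    (∃ p ∈ Acc, {n | ω n ∈ p.1}.Finite ∧ {n | ω n ∈ p.2}.Infinite) ↔
      ∃ p ∈ Acc, infinitelyVisited ω ∩ p.1 = ∅ ∧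
        (infinitelyVisited ω ∩ p.2).Nonempty := by
  simp only [← Set.not_infinite, infinite_setOf_mem_iff, Set.not_nonempty_iff_eq_empty]

variable (hstep : ∀ n, E (ω n) (ω (n + 1)))
  (hinf : ∀ x y, E x y → {n | ω n = x}.Infinite → {n | ω n = y}.Infinite)
include hstep hinf

lemma scc_eq_infinitelyVisited {a : S} (ha : a ∈ infinitelyVisited ω) :
    SCC E a = infinitelyVisited ω := by
  ext b
  refine ⟨fun hb => isTerminal_infinitelyVisited hinf a ha b hb.1, fun hb => ?_⟩
  exact ⟨reflTransGen_of_mem_infinitelyVisited hstep ha hb,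
    reflTransGen_of_mem_infinitelyVisited hstep hb ha⟩

lemma scc_eq_infinitelyVisited_of_isTerminal [Finite S] {n : ℕ}
    (hterm : IsTerminal E (SCC E (ω n))) : SCC E (ω n) = infinitelyVisited ω := by
  obtain ⟨m, hnm, hm⟩ :=
    (eventually_ge_atTop n |>.and (eventually_mem_infinitelyVisited (ω := ω))).exists
  rw [← scc_eq_of_mem (hterm _ ⟨.refl, .refl⟩ _ (reflTransGen_of_le hstep hnm)),
    scc_eq_infinitelyVisited hstep hinf hm]

lemma rabin_iff_exists_accepting_terminal_scc [Finite S] (Acc : Set (Set S × Set S)) :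
    (∃ p ∈ Acc, {n | ω n ∈ p.1}.Finite ∧ {n | ω n ∈ p.2}.Infinite) ↔
      ∃ n, IsTerminal E (SCC E (ω n)) ∧
        ∃ p ∈ Acc, SCC E (ω n) ∩ p.1 = ∅ ∧ (SCC E (ω n) ∩ p.2).Nonempty := by
  rw [rabin_iff_infinitelyVisited]
  constructor
  · intro hacc
    obtain ⟨n, hn⟩ := (eventually_mem_infinitelyVisited (ω := ω)).exists
    rw [← scc_eq_infinitelyVisited hstep hinf hn] at hacc
    exact ⟨n, scc_eq_infinitelyVisited hstep hinf hn ▸ isTerminal_infinitelyVisited hinf,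
      hacc⟩
  · rintro ⟨n, hterm, hacc⟩
    rwa [scc_eq_infinitelyVisited_of_isTerminal hstep hinf hterm] at hacc

end Reachability

section TrajectoryLaw

variable {S : Type*}

lemma preimage_frestrictLe_singleton (n : ℕ) (ω₀ : ℕ → S) :
    Preorder.frestrictLe (π := fun _ => S) n ⁻¹' {Preorder.frestrictLe n ω₀} =
      {ω | ∀ k ≤ n, ω k = ω₀ k} := by
  ext ω
  simp [funext_iff]

variable [MeasurableSpace S]

lemma measurable_piLE_eval (n : ℕ) : Measurable[Filtration.piLE n] fun ω : ℕ → S => ω n :=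
  (measurable_pi_apply (⟨n, Set.mem_Iic.2 le_rfl⟩ : Set.Iic n)).comp
    (comap_measurable (Preorder.restrictLe n))

variable [DecidableEq S]

def HasTrajectoryLaw (P : S → S → ℝ≥0∞) (s : S) (ν : Measure (ℕ → S)) : Prop :=
  ∀ (n : ℕ) (f : ℕ → S), ν {ω | ∀ k ≤ n, ω k = f k} =
    if f 0 = s then ∏ k ∈ Finset.range n, P (f k) (f (k + 1)) else 0

variable {P : S → S → ℝ≥0∞} {s : S} {ν : Measure (ℕ → S)}

lemma HasTrajectoryLaw.measure_cylinder_inter_next (hν : HasTrajectoryLaw P s ν)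
    (n : ℕ) (ω₀ : ℕ → S) (y : S) :
    ν ({ω : ℕ → S | ∀ k ≤ n, ω k = ω₀ k} ∩ {ω | ω (n + 1) = y}) =
      P (ω₀ n) y * ν {ω | ∀ k ≤ n, ω k = ω₀ k} := by
  set f := Function.update ω₀ (n + 1) y
  have hf : ∀ k ≤ n, f k = ω₀ k := fun k hk => Function.update_of_ne (by omega) _ _
  have hfy : f (n + 1) = y := Function.update_self ..
  have hcyl : {ω : ℕ → S | ∀ k ≤ n, ω k = ω₀ k} ∩ {ω | ω (n + 1) = y} =
      {ω | ∀ k ≤ n + 1, ω k = f k} := by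
    ext ω
    constructor
    · rintro ⟨hω, hy⟩ k hk
      rcases Nat.le_succ_iff.1 hk with hk | rfl
      · rw [hω k hk, hf k hk]
      · rw [hy, hfy]
    · intro hω
      exact ⟨fun k hk => (hω k (by omega)).trans (hf k hk), (hω _ le_rfl).trans hfy⟩
  have hprod : ∏ k ∈ Finset.range n, P (f k) (f (k + 1)) =
      ∏ k ∈ Finset.range n, P (ω₀ k) (ω₀ (k + 1)) :=
    Finset.prod_congr rfl fun k hk => by
      rw [Finset.mem_range] at hk
      rw [hf k hk.le, hf (k + 1) hk]
  rw [hcyl, hν, hν, Finset.prod_range_succ, hprod, hf 0 n.zero_le, hf n le_rfl, hfy]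
  split_ifs <;> simp [mul_comm]

variable [MeasurableSingletonClass S] [Countable S]

lemma HasTrajectoryLaw.map_restrict_next_eq (hν : HasTrajectoryLaw P s ν) (n : ℕ) (y : S) :
    (ν.restrict {ω | ω (n + 1) = y}).map (Preorder.frestrictLe (π := fun _ => S) n) =
      (ν.withDensity fun ω => P (ω n) y).map (Preorder.frestrictLe n) := by
  have hπ : Measurable (Preorder.frestrictLe (π := fun _ : ℕ => S) n) := by fun_prop
  refine Measure.ext_iff_singleton.2 fun w => ?_
  have hfib := hπ (measurableSet_singleton w)
  rw [Measure.map_apply hπ (measurableSet_singleton w),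
    Measure.map_apply hπ (measurableSet_singleton w)]
  rcases (Preorder.frestrictLe (π := fun _ => S) n ⁻¹' {w}).eq_empty_or_nonempty
    with hw | ⟨ω₀, rfl⟩
  · rw [hw, measure_empty, measure_empty]
  · rw [preimage_frestrictLe_singleton] at hfib ⊢
    rw [Measure.restrict_apply hfib, withDensity_apply _ hfib, hν.measure_cylinder_inter_next,
      setLIntegral_congr_fun hfib fun ω hω => by rw [hω n le_rfl], setLIntegral_const]

lemma HasTrajectoryLaw.measure_inter_next_eq_setLIntegral (hν : HasTrajectoryLaw P s ν)
    {n : ℕ} {A : Set (ℕ → S)} (hA : MeasurableSet[Filtration.piLE n] A) (y : S) :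
    ν (A ∩ {ω | ω (n + 1) = y}) = ∫⁻ ω in A, P (ω n) y ∂ν := by
  have hπ : Measurable (Preorder.frestrictLe (π := fun _ : ℕ => S) n) := by fun_prop
  rw [Filtration.piLE_eq_comap_frestrictLe] at hA
  obtain ⟨W, hW, rfl⟩ := hA
  rw [← Measure.restrict_apply (hπ hW), ← Measure.map_apply hπ hW, hν.map_restrict_next_eq,
    Measure.map_apply hπ hW, withDensity_apply _ (hπ hW)]

lemma HasTrajectoryLaw.ae_pos_transition (hν : HasTrajectoryLaw P s ν) :
    ∀ᵐ ω ∂ν, ∀ n, 0 < P (ω n) (ω (n + 1)) := by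
  refine ae_all_iff.2 fun n => ?_
  have hnull : ∀ y, ν ({ω | P (ω n) y = 0} ∩ {ω | ω (n + 1) = y}) = 0 := fun y => by
    have hA : MeasurableSet[Filtration.piLE n] {ω : ℕ → S | P (ω n) y = 0} :=
      measurable_piLE_eval n (Set.to_countable {a : S | P a y = 0}).measurableSet
    rw [hν.measure_inter_next_eq_setLIntegral hA,
      setLIntegral_congr_fun (Filtration.piLE.le n _ hA) (fun ω hω => hω), lintegral_zero]
  refine ae_iff.2 <| measure_mono_null (fun ω hω => ?_) (measure_iUnion_null hnull)
  exact Set.mem_iUnion.2 ⟨ω (n + 1), nonpos_iff_eq_zero.1 (not_lt.1 hω), rfl⟩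

end TrajectoryLaw

section MarkovChain

variable {S : Type*} [DecidableEq S] [MeasurableSpace S] [MeasurableSingletonClass S]
  [Countable S] {P : S → PMF S} {s : S} {ν : Measure (ℕ → S)} [IsFiniteMeasure ν]

lemma HasTrajectoryLaw.condExp_indicator_next (hν : HasTrajectoryLaw (fun a b => P a b) s ν)
    (n : ℕ) (y : S) :
    ν[{ω | ω (n + 1) = y}.indicator 1 | Filtration.piLE n] =ᵐ[ν]
      fun ω => (P (ω n) y).toReal := by
  have hB : MeasurableSet {ω : ℕ → S | ω (n + 1) = y} :=
    (measurableSet_singleton y).preimage (measurable_pi_apply (n + 1))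
  have hg : Measurable[Filtration.piLE n] fun ω : ℕ → S => (P (ω n) y).toReal :=
    (measurable_of_countable fun a => (P a y).toReal).comp (measurable_piLE_eval n)
  have hg_int : Integrable (fun ω : ℕ → S => (P (ω n) y).toReal) ν :=
    .of_bound (hg.mono (Filtration.piLE.le n) le_rfl).aestronglyMeasurable 1 (.of_forall fun ω =>
      by simpa using ENNReal.toReal_mono ENNReal.one_ne_top (PMF.coe_le_one (P (ω n)) y))
  refine (ae_eq_condExp_of_forall_setIntegral_eq (Filtration.piLE.le n)
    ((integrable_const 1).indicator hB) (fun _ _ _ => hg_int.integrableOn) (fun A hA _ => ?_)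
    hg.aestronglyMeasurable).symm
  rw [integral_indicator_one hB, measureReal_restrict_apply hB, integral_toReal,
    ← hν.measure_inter_next_eq_setLIntegral hA, Set.inter_comm]
  · rfl
  · exact ((measurable_of_countable fun a => P a y).comp (measurable_pi_apply n)).aemeasurable
  · exact .of_forall fun ω => PMF.apply_lt_top _ _

lemma HasTrajectoryLaw.ae_frequently_iff_tendsto_sum
    (hν : HasTrajectoryLaw (fun a b => P a b) s ν) (y : S) :
    ∀ᵐ ω ∂ν, (∃ᶠ n in atTop, ω n = y) ↔
      Tendsto (fun n => ∑ k ∈ Finset.range n, (P (ω k) y).toReal) atTop atTop := by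
  have hlevy := ae_mem_limsup_atTop_iff (ℱ := Filtration.piLE) ν (s := fun n => {ω | ω n = y})
    fun n => measurable_piLE_eval n (measurableSet_singleton y)
  filter_upwards [hlevy, ae_all_iff.2 fun k => hν.condExp_indicator_next k y] with ω hω hce
  simpa only [mem_limsup_iff_frequently_mem, Set.mem_ofPred_eq, hce] using hω

lemma HasTrajectoryLaw.ae_infinite_of_infinite_of_pos
    (hν : HasTrajectoryLaw (fun a b => P a b) s ν) :
    ∀ᵐ ω ∂ν, ∀ x y, 0 < P x y →
      {n | ω n = x}.Infinite → {n | ω n = y}.Infinite := by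
  refine ae_all_iff.2 fun x => ae_all_iff.2 fun y => ?_
  filter_upwards [hν.ae_frequently_iff_tendsto_sum y] with ω hω hxy hx
  have hr : 0 < (P x y).toReal := ENNReal.toReal_pos hxy.ne' (PMF.apply_ne_top _ _)
  rw [← Nat.frequently_atTop_iff_infinite, hω]
  refine tendsto_atTop_mono (fun n => Finset.sum_le_sum fun k _ => ?_)
    ((Set.infinite_iff_tendsto_sum_indicator_atTop hr).1 hx)
  by_cases hk : ω k = x <;> simp [hk]

end MarkovChain

theorem ae_rabin_iff_accepting_terminal_scc_general {S : Type*} [Fintype S]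
    [DecidableEq S] (P : S → PMF S) (Acc : Finset (Set S × Set S)) :
    letI : MeasurableSpace S := ⊤
    ∀ μ : S → MeasureTheory.Measure (ℕ → S),
      IsTrajectoryMeasureFamily (fun a b => P a b) μ →
      ∀ s : S, ∀ᵐ ω ∂ (μ s),
        ((∃ p ∈ Acc, {n | ω n ∈ p.1}.Finite ∧ {n | ω n ∈ p.2}.Infinite) ↔
          ∃ n : ℕ,
            (∀ a ∈ SCC (fun a b => 0 < P a b) (ω n), ∀ b,
              Relation.ReflTransGen (fun a b => 0 < P a b) a b →
                b ∈ SCC (fun a b => 0 < P a b) (ω n)) ∧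
            ∃ p ∈ Acc, SCC (fun a b => 0 < P a b) (ω n) ∩ p.1 = ∅ ∧
              (SCC (fun a b => 0 < P a b) (ω n) ∩ p.2).Nonempty) := by
  let : MeasurableSpace S := ⊤
  have : MeasurableSingletonClass S := ⟨fun _ => MeasurableSpace.measurableSet_top⟩
  intro μ hμ s
  have := (hμ s).1
  have hν : HasTrajectoryLaw (fun a b => P a b) s (μ s) := (hμ s).2
  filter_upwards [hν.ae_pos_transition, hν.ae_infinite_of_infinite_of_pos] with ω hstep hinf
  exact rabin_iff_exists_accepting_terminal_scc hstep hinf Acc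

/-- almost surely, a trajectory of a finite Markov chain satisfies
the Rabin condition `Acc` iff it reaches a terminal SCC that is accepting for
`Acc`. -/
theorem ae_rabin_iff_accepting_terminal_scc {S : Type*} [Fintype S] [Nonempty S]
    [DecidableEq S] (P : S → PMF S) (Acc : Finset (Set S × Set S)) :
    letI : MeasurableSpace S := ⊤
    ∀ μ : S → MeasureTheory.Measure (ℕ → S),
      IsTrajectoryMeasureFamily (fun a b => P a b) μ →
      ∀ s : S, ∀ᵐ ω ∂ (μ s),
        ((∃ p ∈ Acc, {n | ω n ∈ p.1}.Finite ∧ {n | ω n ∈ p.2}.Infinite) ↔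
          ∃ n : ℕ,
            (∀ a ∈ SCC (fun a b => 0 < P a b) (ω n), ∀ b,
              Relation.ReflTransGen (fun a b => 0 < P a b) a b →
                b ∈ SCC (fun a b => 0 < P a b) (ω n)) ∧
            ∃ p ∈ Acc, SCC (fun a b => 0 < P a b) (ω n) ∩ p.1 = ∅ ∧
              (SCC (fun a b => 0 < P a b) (ω n) ∩ p.2).Nonempty) :=
  ae_rabin_iff_accepting_terminal_scc_general P Acc
end
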